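/- For jointly centered bivariate Gaussian (X, Y) with correlation ρ and unit variances, E[sign(X)·sign(Y)] = (2/π)·arcsin(ρ) (the arcsine law for one-bit quantization). -/

import Mathlib

/-!
In polar coordinates `(X, Y) = (r cos φ, r sin (θ + φ))` with `θ = arcsin ρ`, so
`sign X · sign Y` depends only on the angle `φ`, which under the standard Gaussian on `ℝ²` is
uniform on `(-π, π)`. The angular integrand `sign (cos φ) · sign (sin (θ + φ))` is `π`-periodic
and equals `sign (θ + φ)` on `(-π/2, π/2)`, where it integrates to
`|θ + π/2| - |θ - π/2| = 2θ`; hence the expectation is `(2π)⁻¹ · 4θ = (2/π) arcsin ρ`.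
-/

open MeasureTheory ProbabilityTheory Real Set
open scoped NNReal

namespace Real

theorem monotone_sign : Monotone Real.sign := by
  intro a b hab
  unfold Real.sign
  split_ifs <;> norm_num <;> linarith

theorem abs_sign_le_one (x : ℝ) : |Real.sign x| ≤ 1 := by
  rcases sign_apply_eq x with h | h | h <;> simp [h]

theorem sign_mul_of_pos {r : ℝ} (hr : 0 < r) (x : ℝ) : Real.sign (r * x) = Real.sign x := by
  rcases lt_trichotomy x 0 with h | rfl | h
  · rw [sign_of_neg h, sign_of_neg (mul_neg_of_pos_of_neg hr h)]
  · simp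
  · rw [sign_of_pos h, sign_of_pos (mul_pos hr h)]

theorem sign_sin_of_mem_Ioo {x : ℝ} (hx : x ∈ Ioo (-π) π) : Real.sign (sin x) = Real.sign x := by
  rcases lt_trichotomy x 0 with h | rfl | h
  · rw [sign_of_neg h, sign_of_neg (sin_neg_of_neg_of_neg_pi_lt h hx.1)]
  · simp
  · rw [sign_of_pos h, sign_of_pos (sin_pos_of_pos_of_lt_pi h hx.2)]

end Real

theorem integral_sign (a b : ℝ) : ∫ x in a..b, Real.sign x = |b| - |a| := by
  refine integral_eq_of_hasDerivAt_off_countable _ _ (countable_singleton 0)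
    continuous_abs.continuousOn (fun x hx => ?_) Real.monotone_sign.intervalIntegrable
  rcases lt_or_gt_of_ne (show x ≠ 0 from hx.2) with h | h
  · simpa [sign_of_neg h] using hasDerivAt_abs_neg h
  · simpa [sign_of_pos h] using hasDerivAt_abs_pos h

theorem integral_sign_cos_mul_sign_sin_add {θ : ℝ} (hθ : θ ∈ Icc (-(π / 2)) (π / 2)) :
    ∫ φ in -π..π, Real.sign (cos φ) * Real.sign (sin (θ + φ)) = 4 * θ := by
  set f : ℝ → ℝ := fun φ => Real.sign (cos φ) * Real.sign (sin (θ + φ))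
  have hper : Function.Periodic f π := fun φ => by
    simp only [f, cos_add_pi, ← add_assoc, sin_add_pi, Real.sign_neg, neg_mul_neg]
  have hint (a b : ℝ) : IntervalIntegrable f volume a b := by
    refine (intervalIntegrable_const (c := (1 : ℝ))).mono_fun ?_ (ae_of_all _ fun φ => ?_)
    · exact ((Real.monotone_sign.measurable.comp continuous_cos.measurable).mul
        (Real.monotone_sign.measurable.comp (continuous_sin.comp
          (continuous_const_add θ)).measurable)).aestronglyMeasurable
    · simpa [f, abs_mul] using mul_le_one₀ (Real.abs_sign_le_one _) (abs_nonneg _)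
        (Real.abs_sign_le_one _)
  have hhalf : ∫ φ in -(π / 2)..π / 2, f φ = 2 * θ := by
    have hf : EqOn f (fun φ => Real.sign (θ + φ)) (Ioo (-(π / 2)) (π / 2)) := fun φ hφ => by
      simp only [f, sign_of_pos (cos_pos_of_mem_Ioo hφ), one_mul]
      exact Real.sign_sin_of_mem_Ioo ⟨by linarith [hθ.1, hφ.1], by linarith [hθ.2, hφ.2]⟩
    rw [intervalIntegral.integral_congr_Ioo_of_le (by linarith [pi_pos]) hf,
      intervalIntegral.integral_comp_add_left (fun x => Real.sign x), integral_sign,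
      abs_of_nonneg (by linarith [hθ.1]), abs_of_nonpos (by linarith [hθ.2])]
    ring
  calc ∫ φ in -π..π, f φ = ∫ φ in -π..-π + (2 : ℤ) • π, f φ := by
        rw [show -π + (2 : ℤ) • π = π by norm_num; ring]
    _ = 2 * ∫ φ in -(π / 2)..-(π / 2) + π, f φ := by
        rw [hper.intervalIntegral_add_zsmul_eq 2 (-π) hint,
          hper.intervalIntegral_add_eq (-π) (-(π / 2))]
        norm_num
    _ = 4 * θ := by rw [show -(π / 2) + π = π / 2 by ring, hhalf]; ring

theorem integral_mul_exp_neg_sq_div_two_Ioi : ∫ r in Ioi (0 : ℝ), r * exp (-r ^ 2 / 2) = 1 := by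
  have h := integral_mul_cexp_neg_mul_sq (b := 1 / 2) (by norm_num)
  norm_num at h
  apply Complex.ofReal_injective
  rw [Complex.ofReal_one, ← h, ← integral_complex_ofReal]
  push_cast
  congr 1 with r
  ring_nf

theorem integral_gaussianReal_prod {m₁ m₂ : ℝ} {v₁ v₂ : ℝ≥0} (hv₁ : v₁ ≠ 0) (hv₂ : v₂ ≠ 0)
    (F : ℝ × ℝ → ℝ) :
    ∫ p, F p ∂(gaussianReal m₁ v₁).prod (gaussianReal m₂ v₂)
      = ∫ p, gaussianPDFReal m₁ v₁ p.1 * gaussianPDFReal m₂ v₂ p.2 * F p := by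
  rw [gaussianReal_of_var_ne_zero _ hv₁, gaussianReal_of_var_ne_zero _ hv₂,
    prod_withDensity (measurable_gaussianPDF _ _) (measurable_gaussianPDF _ _),
    ← Measure.volume_eq_prod, integral_withDensity_eq_integral_toReal_smul]
  · simp [ENNReal.toReal_mul, toReal_gaussianPDF]
  · exact ((measurable_gaussianPDF _ _).comp measurable_fst).mul
      ((measurable_gaussianPDF _ _).comp measurable_snd)
  · exact ae_of_all _ fun _ => ENNReal.mul_lt_top gaussianPDF_lt_top gaussianPDF_lt_top

theorem gaussianPDFReal_zero_one_mul (x y : ℝ) :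
    gaussianPDFReal 0 1 x * gaussianPDFReal 0 1 y = (2 * π)⁻¹ * exp (-(x ^ 2 + y ^ 2) / 2) := by
  have hsqrt : (√(2 * π))⁻¹ * (√(2 * π))⁻¹ = (2 * π)⁻¹ := by
    rw [← mul_inv, mul_self_sqrt (by positivity)]
  simp only [gaussianPDFReal, NNReal.coe_one, mul_one, sub_zero]
  rw [mul_mul_mul_comm, hsqrt, ← exp_add]
  ring_nf

theorem integral_gaussianReal_prod_of_polar (F : ℝ × ℝ → ℝ) (A : ℝ → ℝ)
    (hF : ∀ r > 0, ∀ φ, F (r * cos φ, r * sin φ) = A φ) :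
    ∫ p, F p ∂(gaussianReal 0 1).prod (gaussianReal 0 1)
      = (2 * π)⁻¹ * ∫ φ in -π..π, A φ := by
  rw [integral_gaussianReal_prod one_ne_zero one_ne_zero, ← integral_comp_polarCoord_symm,
    polarCoord_target]
  calc _ = ∫ p in Ioi 0 ×ˢ Ioo (-π) π, (p.1 * exp (-p.1 ^ 2 / 2)) * ((2 * π)⁻¹ * A p.2) := by
        refine setIntegral_congr_fun (measurableSet_Ioi.prod measurableSet_Ioo) fun p hp => ?_
        have hsq : (p.1 * cos p.2) ^ 2 + (p.1 * sin p.2) ^ 2 = p.1 ^ 2 := by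
          linear_combination p.1 ^ 2 * cos_sq_add_sin_sq p.2
        simp only [polarCoord_symm_apply, gaussianPDFReal_zero_one_mul, hsq, hF p.1 hp.1,
          smul_eq_mul]
        ring
    _ = (2 * π)⁻¹ * ∫ φ in -π..π, A φ := by
        rw [Measure.volume_eq_prod, ← Measure.prod_restrict,
          integral_prod_mul (fun r => r * exp (-r ^ 2 / 2)) (fun φ => (2 * π)⁻¹ * A φ),
          integral_mul_exp_neg_sq_div_two_Ioi, one_mul, integral_const_mul,
          intervalIntegral.integral_of_le (by linarith [pi_pos]), integral_Ioc_eq_integral_Ioo]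

/-- Arcsine law for one-bit quantization: for a centered bivariate Gaussian (X, Y) with unit
variances and correlation ρ (represented via independent standard Gaussians),
E[sign(X)·sign(Y)] = (2/π)·arcsin(ρ). -/
theorem stmt13 (ρ : ℝ) (hρ : ρ ∈ Set.Icc (-1 : ℝ) 1)
    (μ : Measure (ℝ × ℝ)) (hμ : μ = (gaussianReal 0 1).prod (gaussianReal 0 1))
    (X Y : ℝ × ℝ → ℝ)
    (hX : ∀ p, X p = p.1)
    (hY : ∀ p, Y p = ρ * p.1 + Real.sqrt (1 - ρ ^ 2) * p.2) :
    ∫ p, Real.sign (X p) * Real.sign (Y p) ∂μ = (2 / Real.pi) * Real.arcsin ρ := by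
  set θ := arcsin ρ
  have hpolar (r : ℝ) (hr : 0 < r) (φ : ℝ) :
      Real.sign (X (r * cos φ, r * sin φ)) * Real.sign (Y (r * cos φ, r * sin φ))
        = Real.sign (cos φ) * Real.sign (sin (θ + φ)) := by
    have hY' : Y (r * cos φ, r * sin φ) = r * sin (θ + φ) := by
      rw [hY, sin_add, sin_arcsin hρ.1 hρ.2, cos_arcsin]
      ring
    rw [hX, hY', Real.sign_mul_of_pos hr, Real.sign_mul_of_pos hr]
  rw [hμ, integral_gaussianReal_prod_of_polar _ _ hpolar,
    integral_sign_cos_mul_sign_sin_add ⟨neg_pi_div_two_le_arcsin ρ, arcsin_le_pi_div_two ρ⟩]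
  field_simp
  ring
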